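/- arXiv:2303.10953 — 3 statements merged into one kernel-verified Lean document; each statement's English description precedes it below -/
import Mathlib

section
/- Let p be a real number with 0 ≤ p ≤ 1/2. Then the function sending a natural number l to Σ_{j odd, 0 ≤ j ≤ l} C(l, j) p^j (1−p)^{l−j} is monotone nondecreasing in l; that is, for all natural numbers l ≤ l', Σ_{j odd ≤ l} C(l, j) p^j (1−p)^{l−j} ≤ Σ_{j odd ≤ l'} C(l', j) p^j (1−p)^{l'−j}. -/
/-!
Subtracting the binomial expansion of `((1 - p) - p)^l` from that of `((1 - p) + p)^l = 1` cancels
the even terms and doubles the odd ones, so the odd-flip probability equals `(1 - (1 - 2p)^l) / 2`. For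
`0 ≤ p ≤ 1/2` the base `1 - 2p` lies in `[0, 1]`, so its powers decrease in `l`.
-/

open Finset

theorem two_mul_sum_odd_binomial_terms {R : Type*} [CommRing R] (x y : R) (n : ℕ) :
    2 * ∑ j ∈ range (n + 1), (if Odd j then (n.choose j : R) * x ^ j * y ^ (n - j) else 0) =
      (x + y) ^ n - (y - x) ^ n := by
  rw [sub_eq_neg_add y, add_pow, add_pow, ← sum_sub_distrib, mul_sum]
  refine sum_congr rfl fun j _ => ?_
  rcases j.even_or_odd with hj | hj
  · rw [if_neg (Nat.not_odd_iff_even.mpr hj), hj.neg_pow]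
    ring
  · rw [if_pos hj, hj.neg_pow]
    ring

/-- For `0 ≤ p ≤ 1/2`, the per-coordinate odd-flip probability
`∑_{j odd ≤ l} C(l,j) p^j (1-p)^(l-j)` is monotone nondecreasing in `l`. -/
theorem odd_binomial_sum_monotone (p : ℝ) (hp0 : 0 ≤ p) (hp : p ≤ 1 / 2) :
    Monotone (fun l : ℕ =>
      ∑ j ∈ Finset.range (l + 1),
        if Odd j then (l.choose j : ℝ) * p ^ j * (1 - p) ^ (l - j) else 0) := by
  have closed_form (l : ℕ) :
      (∑ j ∈ range (l + 1), if Odd j then (l.choose j : ℝ) * p ^ j * (1 - p) ^ (l - j) else 0) =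
        (1 - (1 - 2 * p) ^ l) / 2 := by
    have h := two_mul_sum_odd_binomial_terms p (1 - p) l
    rw [add_sub_cancel, one_pow, sub_sub, ← two_mul] at h
    linarith
  intro a b hab
  simp only [closed_form]
  have hpow : (1 - 2 * p) ^ b ≤ (1 - 2 * p) ^ a :=
    pow_le_pow_of_le_one (by linarith) (by linarith) hab
  linarith
end

section
/- Let n ≥ 2 and e be natural numbers, X a type, and A_1, …, A_n finite subsets of X with |A_i| ≤ e for each i. Suppose there is an injective assignment of elements x_{ij} ∈ X to the pairs 1 ≤ i < j ≤ n such that x_{ij} ∈ A_i ∩ A_j for every pair. Then |A_1 ∪ ⋯ ∪ A_n| ≤ n·e − n(n−1)/2. -/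
open Finset

/-!
Double counting incidences: every element of `⋃ i, A i` lies in at least one `A i`, and each of
the `n.choose 2` distinct witnesses `x p` in at least two, so `∑ i, #(A i) ≥ #(⋃ i, A i) + n.choose 2`.
-/

theorem Finset.card_biUnion_add_card_le_sum_card {ι α : Type*} [Fintype ι] [DecidableEq ι]
    [DecidableEq α] (s : Finset ι) (A : ι → Finset α) {W : Finset α}
    (hW : ∀ y ∈ W, ∃ i ∈ s, ∃ j ∈ s, i ≠ j ∧ y ∈ A i ∧ y ∈ A j) :
    #(s.biUnion A) + #W ≤ ∑ i ∈ s, #(A i) := by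
  have hWU : W ⊆ s.biUnion A := fun y hy ↦ by
    obtain ⟨i, hi, -, -, -, hyi, -⟩ := hW y hy
    exact mem_biUnion.2 ⟨i, hi, hyi⟩
  have hmult : ∀ y ∈ s.biUnion A, 1 + (if y ∈ W then 1 else 0) ≤ #{j | j ∈ s ∧ y ∈ A j} := by
    intro y hy
    split_ifs with hyW
    · obtain ⟨i, hi, j, hj, hij, hyi, hyj⟩ := hW y hyW
      calc 1 + 1 = #{i, j} := (card_pair hij).symm
        _ ≤ _ := card_le_card <| by simp [insert_subset_iff, hi, hj, hyi, hyj]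
    · obtain ⟨i, hi, hyi⟩ := mem_biUnion.1 hy
      exact card_pos.2 ⟨i, by simp [hi, hyi]⟩
  calc #(s.biUnion A) + #W
      = ∑ y ∈ s.biUnion A, (1 + if y ∈ W then 1 else 0) := by
        rw [sum_add_distrib, sum_boole, filter_mem_eq_inter, inter_eq_right.2 hWU, card_eq_sum_ones]
        rfl
    _ ≤ ∑ y ∈ s.biUnion A, #{j | j ∈ s ∧ y ∈ A j} := sum_le_sum hmult
    _ = ∑ i ∈ s, #(A i) := (sum_card_eq_sum_biUnion_card A s).symm

theorem perfect_csn_upper_bound_general (n e : ℕ) {X : Type*}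
    [DecidableEq X] (A : Fin n → Finset X) (hA : ∀ i, (A i).card ≤ e)
    (x : {p : Fin n × Fin n // p.1 < p.2} → X)
    (hinj : Function.Injective x)
    (hx : ∀ p : {p : Fin n × Fin n // p.1 < p.2}, x p ∈ A p.1.1 ∩ A p.1.2) :
    (Finset.univ.biUnion A).card ≤ n * e - n * (n - 1) / 2 := by
  have hwitnesses : #(univ.image x) = n * (n - 1) / 2 := by
    rw [card_image_of_injective _ hinj, card_univ, Fintype.card_subtype,
      Fintype.card_product_filter_lt, Fintype.card_fin, Nat.choose_two_right]
  have hincidences := univ.card_biUnion_add_card_le_sum_card A (W := univ.image x) <| by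
    rintro _ hy
    obtain ⟨p, -, rfl⟩ := mem_image.1 hy
    exact ⟨_, mem_univ _, _, mem_univ _, p.2.ne, mem_inter.1 (hx p)⟩
  have hsum : ∑ i, #(A i) ≤ n * e := by
    simpa using sum_le_card_nsmul univ (fun i ↦ #(A i)) e fun i _ ↦ hA i
  omega

/-- If `n ≥ 2` finite sets `A i` each have at most `e` elements, and there is
an injective choice of witnesses `x p ∈ A p.1 ∩ A p.2` for every pair
`p.1 < p.2`, then the union has at most `n * e - n * (n-1) / 2` elements. -/
theorem perfect_csn_upper_bound (n e : ℕ) (hn : 2 ≤ n) {X : Type*}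
    [DecidableEq X] (A : Fin n → Finset X) (hA : ∀ i, (A i).card ≤ e)
    (x : {p : Fin n × Fin n // p.1 < p.2} → X)
    (hinj : Function.Injective x)
    (hx : ∀ p : {p : Fin n × Fin n // p.1 < p.2}, x p ∈ A p.1.1 ∩ A p.1.2) :
    (Finset.univ.biUnion A).card ≤ n * e - n * (n - 1) / 2 :=
  perfect_csn_upper_bound_general n e A hA x hinj hx
end

section
/- Let n ≥ 2 and r be natural numbers, X a type, and A_1, …, A_n finite subsets of X. Suppose (i) there is an injective assignment of elements x_{ij} ∈ X to the pairs 1 ≤ i < j ≤ n with x_{ij} ∈ A_i ∩ A_j for every pair, and (ii) for each i there is a subset W_i ⊆ A_i with |W_i| ≥ r and W_i ∩ A_j = ∅ for every j ≠ i. Then |A_1 ∪ ⋯ ∪ A_n| ≥ n·r + n(n−1)/2. -/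
open Finset

/-! Every element of `⋃ A i` that lies in two of the sets is outside all the private parts `W i`,
and the private parts are pairwise disjoint. So the `n.choose 2` distinct witnesses `x_{ij}` and
the `n` disjoint blocks `W i`, each of size at least `r`, are disjoint pieces of the union. -/

section PrivateParts

variable {ι X : Type*} [DecidableEq X] {A W : ι → Finset X}

theorem pairwiseDisjoint_of_inter_eq_empty (hWsub : ∀ i, W i ⊆ A i)
    (hWdisj : ∀ i j, j ≠ i → W i ∩ A j = ∅) (s : Set ι) : s.PairwiseDisjoint W := by
  intro i _ j _ hij
  rw [Function.onFun, disjoint_iff_inter_eq_empty, ← subset_empty, ← hWdisj i j hij.symm]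
  exact inter_subset_inter_left (hWsub j)

theorem notMem_biUnion_of_mem_of_mem (hWdisj : ∀ i j, j ≠ i → W i ∩ A j = ∅)
    (s : Finset ι) {a : X} {i j : ι} (hij : i ≠ j) (hi : a ∈ A i) (hj : a ∈ A j) :
    a ∉ s.biUnion W := by
  simp only [mem_biUnion, not_exists, not_and]
  intro k _ hk
  obtain ⟨l, hlk, hl⟩ : ∃ l, l ≠ k ∧ a ∈ A l := by
    by_cases hik : i = k
    · exact ⟨j, hik ▸ hij.symm, hj⟩
    · exact ⟨i, hik, hi⟩
  simpa [hWdisj k l hlk] using mem_inter.2 ⟨hk, hl⟩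

theorem card_add_sum_card_le_card_biUnion (hWsub : ∀ i, W i ⊆ A i)
    (hWdisj : ∀ i j, j ≠ i → W i ∩ A j = ∅) (s : Finset ι) (S : Finset X)
    (hS : ∀ a ∈ S, ∃ i ∈ s, ∃ j ∈ s, i ≠ j ∧ a ∈ A i ∧ a ∈ A j) :
    #S + ∑ i ∈ s, #(W i) ≤ #(s.biUnion A) := by
  have hdisj : Disjoint S (s.biUnion W) := disjoint_left.2 fun a ha => by
    obtain ⟨i, -, j, -, hij, hi, hj⟩ := hS a ha
    exact notMem_biUnion_of_mem_of_mem hWdisj s hij hi hj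
  have hsub : S ∪ s.biUnion W ⊆ s.biUnion A := union_subset
    (fun a ha => by
      obtain ⟨i, hi, -, -, -, ha, -⟩ := hS a ha
      exact mem_biUnion.2 ⟨i, hi, ha⟩)
    (biUnion_mono fun i _ => hWsub i)
  calc #S + ∑ i ∈ s, #(W i) = #(S ∪ s.biUnion W) := by
        rw [card_union_of_disjoint hdisj,
          card_biUnion (pairwiseDisjoint_of_inter_eq_empty hWsub hWdisj _)]
    _ ≤ #(s.biUnion A) := card_le_card hsub

end PrivateParts

theorem Fin.card_subtype_fst_lt_snd (n : ℕ) :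
    Fintype.card {p : Fin n × Fin n // p.1 < p.2} = n * (n - 1) / 2 := by
  rw [Fintype.card_subtype, Fintype.card_product_filter_lt, Fintype.card_fin, Nat.choose_two_right]

theorem perfect_csn_lower_bound_general (n r : ℕ) {X : Type*}
    [DecidableEq X] (A : Fin n → Finset X)
    (x : {p : Fin n × Fin n // p.1 < p.2} → X)
    (hinj : Function.Injective x)
    (hx : ∀ p : {p : Fin n × Fin n // p.1 < p.2}, x p ∈ A p.1.1 ∩ A p.1.2)
    (W : Fin n → Finset X) (hWsub : ∀ i, W i ⊆ A i)
    (hWcard : ∀ i, r ≤ (W i).card)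
    (hWdisj : ∀ i j, j ≠ i → W i ∩ A j = ∅) :
    n * r + n * (n - 1) / 2 ≤ (Finset.univ.biUnion A).card := by
  have hwitnesses : #(univ.image x) = n * (n - 1) / 2 := by
    rw [card_image_of_injective _ hinj, card_univ, Fin.card_subtype_fst_lt_snd]
  have hprivate : n * r ≤ ∑ i, #(W i) := by
    simpa [mul_comm] using sum_le_sum fun i (_ : i ∈ univ) => hWcard i
  have hunion := card_add_sum_card_le_card_biUnion hWsub hWdisj univ (univ.image x) fun a ha => by
    obtain ⟨p, -, rfl⟩ := mem_image.1 ha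
    exact ⟨_, mem_univ _, _, mem_univ _, p.2.ne, mem_inter.1 (hx p)⟩
  omega

/-- If `n ≥ 2` finite sets `A i` admit an injective choice of pairwise
intersection witnesses `x p ∈ A p.1 ∩ A p.2`, and each `A i` contains a subset
`W i` of at least `r` elements disjoint from every other `A j`, then the union
has at least `n * r + n * (n-1) / 2` elements. -/
theorem perfect_csn_lower_bound (n r : ℕ) (hn : 2 ≤ n) {X : Type*}
    [DecidableEq X] (A : Fin n → Finset X)
    (x : {p : Fin n × Fin n // p.1 < p.2} → X)
    (hinj : Function.Injective x)
    (hx : ∀ p : {p : Fin n × Fin n // p.1 < p.2}, x p ∈ A p.1.1 ∩ A p.1.2)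
    (W : Fin n → Finset X) (hWsub : ∀ i, W i ⊆ A i)
    (hWcard : ∀ i, r ≤ (W i).card)
    (hWdisj : ∀ i j, j ≠ i → W i ∩ A j = ∅) :
    n * r + n * (n - 1) / 2 ≤ (Finset.univ.biUnion A).card :=
  perfect_csn_lower_bound_general n r A x hinj hx W hWsub hWcard hWdisj
end
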